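/- arXiv:1201.2932 — 3 statements merged into one kernel-verified Lean document; each statement's English description precedes it below -/
import Mathlib

section
/- For every countable family 𝒢 of functions from ℕ to ℕ, there exists a monotonically nondecreasing function z : ℕ → ℕ tending to infinity such that for every g ∈ 𝒢, g(z(m)) ≤ m for all but finitely many m. -/
def EvDom (f g : ℕ → ℕ) : Prop := ∃ N, ∀ n ≥ N, f n ≤ g n

def TendsInf (f : ℕ → ℕ) : Prop := ∀ N, ∃ M, ∀ m ≥ M, N ≤ f m

theorem stmt_0 (G : Set (ℕ → ℕ)) (hG : G.Countable) :
    ∃ z : ℕ → ℕ, Monotone z ∧ TendsInf z ∧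
      ∀ g ∈ G, ∃ N, ∀ m ≥ N, g (z m) ≤ m := by
  rcases G.eq_empty_or_nonempty with hemp | hne
  · exact ⟨id, monotone_id, fun N => ⟨N, fun m hm => hm⟩,
      fun g hg => by simp [hemp] at hg⟩
  obtain ⟨f, hf⟩ := hG.exists_eq_range hne
  -- a : strictly increasing sequence with a k ≥ f i k for i ≤ k, k ≥ 1
  set a : ℕ → ℕ := fun k => Nat.rec 0
    (fun k ak => max (ak + 1) ((Finset.range (k + 2)).sup (fun i => f i (k + 1)))) k with ha
  have hastep : ∀ k, a (k + 1) = max (a k + 1)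
      ((Finset.range (k + 2)).sup (fun i => f i (k + 1))) := fun k => rfl
  have hamono : StrictMono a := strictMono_nat_of_lt_succ (fun k => by
    rw [hastep]; exact lt_of_lt_of_le (Nat.lt_succ_self _) (le_max_left _ _))
  have hadom : ∀ i k, i ≤ k → 1 ≤ k → f i k ≤ a k := by
    intro i k hik hk
    obtain ⟨k', rfl⟩ := Nat.exists_eq_succ_of_ne_zero (by omega : k ≠ 0)
    rw [hastep]
    refine le_trans ?_ (le_max_right _ _)
    have hmem : i ∈ Finset.range (k' + 2) := Finset.mem_range.2 (by omega)
    exact Finset.le_sup (f := fun i => f i (k' + 1)) hmem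
  set z : ℕ → ℕ := fun m => Nat.findGreatest (fun k => a k ≤ m) m with hz
  have ha0 : a 0 = 0 := rfl
  have hzspec : ∀ m, a (z m) ≤ m :=
    fun m => Nat.findGreatest_spec (P := fun k => a k ≤ m) (Nat.zero_le m) (show a 0 ≤ m from le_of_eq_of_le ha0 (Nat.zero_le m))
  have hzge : ∀ k m, a k ≤ m → k ≤ z m := by
    intro k m hk
    exact Nat.le_findGreatest (le_trans (hamono.le_apply) hk) hk
  refine ⟨z, ?_, ?_, ?_⟩
  · intro m m' hm
    exact hzge (z m) m' (le_trans (hzspec m) hm)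
  · intro N
    exact ⟨a N, fun m hm => hzge N m hm⟩
  · intro g hg
    rw [hf] at hg
    obtain ⟨i, rfl⟩ := hg
    refine ⟨a (i + 1), fun m hm => ?_⟩
    have h1 : i + 1 ≤ z m := hzge (i + 1) m hm
    exact le_trans (hadom i (z m) (by omega) (by omega)) (hzspec m)
end

section
/- Let d : ℕ → ℕ be nondecreasing, and let z₀, z₁, f : ℕ → ℕ with z₀, z₁ nondecreasing tending to infinity, satisfying: (1) n < f(z₀(n)) for all n, (2) n < f(z₁(n)) for all n, and (3) f(n) ≤ d(n) for all n ≥ N₀. Define x as follows: for each n let k(n) be least with n ≤ d(k(n)) and x(n) the largest i with d constant on [k(n), k(n)+i]. Suppose further that for all sufficiently large n, z₁(n) ≤ z₀(d(z₁(n))) and N₀ ≤ n, N₀ ≤ z₀(d(z₁(n))). Then x(n) < z₀(d(z₁(n))) for all sufficiently large n. -/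
theorem stmt_9 (d z₀ z₁ f : ℕ → ℕ) (N₀ : ℕ)
    (hd : Monotone d) (hdinf : TendsInf d)
    (hz₀ : Monotone z₀) (hz₀inf : TendsInf z₀)
    (hz₁ : Monotone z₁) (hz₁inf : TendsInf z₁)
    (h1 : ∀ n, n < f (z₀ n))
    (h2 : ∀ n, n < f (z₁ n))
    (h3 : ∀ n ≥ N₀, f n ≤ d n)
    (k x : ℕ → ℕ)
    (hk : ∀ n, IsLeast {k' | n ≤ d k'} (k n))
    (hx : ∀ n, IsGreatest {i | ∀ j, k n ≤ j → j ≤ k n + i → d j = d (k n)} (x n))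
    (hlarge : ∃ M, ∀ n ≥ M, z₁ n ≤ z₀ (d (z₁ n)) ∧ N₀ ≤ n ∧ N₀ ≤ z₀ (d (z₁ n))) :
    ∃ M, ∀ n ≥ M, x n < z₀ (d (z₁ n)) := by
  obtain ⟨M₁, hM₁⟩ := hlarge
  obtain ⟨M₂, hM₂⟩ := hz₁inf N₀
  refine ⟨max M₁ M₂, fun n hn => ?_⟩
  obtain ⟨hz₁z₀, hN₀n, hN₀m⟩ := hM₁ n (le_trans (le_max_left _ _) hn)
  have hNz₁ : N₀ ≤ z₁ n := hM₂ n (le_trans (le_max_right _ _) hn)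
  set m := z₀ (d (z₁ n)) with hm
  -- n ≤ d (z₁ n)
  have hnd : n ≤ d (z₁ n) := le_of_lt (lt_of_lt_of_le (h2 n) (h3 _ hNz₁))
  have hkz₁ : k n ≤ z₁ n := (hk n).2 hnd
  by_contra hcon
  push_neg at hcon  -- m ≤ x n
  have hconst := (hx n).1
  have hz₁m : z₁ n ≤ m := hz₁z₀
  have hmx : m ≤ k n + x n := le_trans hcon (Nat.le_add_left _ _)
  have hd1 : d (z₁ n) = d (k n) :=
    hconst (z₁ n) hkz₁ (le_trans hz₁m hmx)
  have hd2 : d m = d (k n) :=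
    hconst m (le_trans hkz₁ hz₁m) hmx
  have : d (z₁ n) < d m := lt_of_lt_of_le (h1 (d (z₁ n))) (h3 _ hN₀m)
  omega
end

section
/- There exists a function Φ : (ℕ → ℕ) → (ℕ → ℕ) such that each Φ(z) is nondecreasing and tends to infinity, Φ is cofinal into the nondecreasing functions tending to infinity under ≥* (that is, for every nondecreasing w : ℕ → ℕ tending to infinity there is z with Φ(z) ≤* w), and for all strictly increasing z₀, z₁ : ℕ → ℕ, z₀ ≤* z₁ if and only if Φ(z₀) ≥* Φ(z₁). -/
private def PhiAux (z : ℕ → ℕ) (m : ℕ) : ℕ :=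
  Nat.find (⟨m, le_max_right _ _⟩ : ∃ k, m ≤ max (z k) k)

private lemma PhiAux_spec (z : ℕ → ℕ) (m : ℕ) :
    m ≤ max (z (PhiAux z m)) (PhiAux z m) :=
  Nat.find_spec (⟨m, le_max_right _ _⟩ : ∃ k, m ≤ max (z k) k)

private lemma PhiAux_min (z : ℕ → ℕ) {m k : ℕ} (h : m ≤ max (z k) k) :
    PhiAux z m ≤ k :=
  Nat.find_min' _ h

private lemma PhiAux_lt (z : ℕ → ℕ) {m k : ℕ} (h : k < PhiAux z m) :
    max (z k) k < m := by
  have := Nat.find_min (⟨m, le_max_right _ _⟩ : ∃ k, m ≤ max (z k) k) h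
  omega

theorem stmt_16 :
    ∃ Φ : (ℕ → ℕ) → (ℕ → ℕ),
      (∀ z, Monotone (Φ z) ∧ TendsInf (Φ z)) ∧
      (∀ w : ℕ → ℕ, Monotone w → TendsInf w → ∃ z, EvDom (Φ z) w) ∧
      (∀ z₀ z₁ : ℕ → ℕ, StrictMono z₀ → StrictMono z₁ →
        (EvDom z₀ z₁ ↔ EvDom (Φ z₁) (Φ z₀))) := by
  refine ⟨PhiAux, fun z => ⟨?_, ?_⟩, ?_, ?_⟩
  · -- monotone
    intro m m' hmm
    exact PhiAux_min z (le_trans hmm (PhiAux_spec z m'))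
  · -- tends to infinity
    intro N
    refine ⟨(Finset.range N).sup (fun i => max (z i) i) + 1, fun m hm => ?_⟩
    by_contra h
    push_neg at h
    have h1 := PhiAux_spec z m
    have h2 : max (z (PhiAux z m)) (PhiAux z m) ≤
        (Finset.range N).sup (fun i => max (z i) i) :=
      Finset.le_sup (f := fun i => max (z i) i) (Finset.mem_range.mpr h)
    omega
  · -- cofinal
    intro w _hw hwi
    set z : ℕ → ℕ := fun k => (hwi (k + 1)).choose with hz
    refine ⟨z, 0, fun m _ => ?_⟩
    have hzm : m < z (w m) := by
      by_contra h
      push_neg at h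
      have := (hwi (w m + 1)).choose_spec m h
      omega
    exact PhiAux_min z (le_max_of_le_left hzm.le)
  · -- order reversing
    intro z₀ z₁ h₀ h₁
    constructor
    · rintro ⟨N, hN⟩
      refine ⟨z₀ N + 1, fun m hm => ?_⟩
      have hspec : m ≤ z₀ (PhiAux z₀ m) := by
        have h1 := PhiAux_spec z₀ m
        have h2 := h₀.le_apply (x := PhiAux z₀ m)
        omega
      have hkN : N ≤ PhiAux z₀ m := by
        by_contra h
        push_neg at h
        have := h₀ h
        omega
      exact PhiAux_min z₁ (le_max_of_le_left (le_trans hspec (hN _ hkN)))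
    · rintro ⟨M, hM⟩
      refine ⟨M, fun n hn => ?_⟩
      have hm : M ≤ z₀ n := le_trans hn (h₀.le_apply)
      have h1 : PhiAux z₀ (z₀ n) ≤ n := PhiAux_min z₀ (le_max_left _ _)
      have h2 : PhiAux z₁ (z₀ n) ≤ n := le_trans (hM _ hm) h1
      have h3 : z₀ n ≤ z₁ (PhiAux z₁ (z₀ n)) := by
        have := PhiAux_spec z₁ (z₀ n)
        have := h₁.le_apply (x := PhiAux z₁ (z₀ n))
        omega
      exact le_trans h3 (h₁.monotone h2)
end
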